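/- Let p : ℕ → [0,∞) satisfy ∑_{s} s³ p_s < ∞, let λ := ∑_{s} s p_s, for each s let (t_{s,ℓ})_{ℓ=0}^{s} be nonnegative reals with ∑_{ℓ=0}^{s} t_{s,ℓ} = 1, and let π ∈ [0,1]. Define a(z) := ∑_{s=0}^∞ p_s ∑_{ℓ=0}^{s} t_{s,ℓ} ∑_{r=s−ℓ}^{s} r b_{s,r}(z) and g(z) := λ z (1 − π + π z) − a(1 − π + π z) for z ∈ [0,1]. Then g has a derivative at z = 1 within [0,1] equal to λ − π ∑_{s} s(s−1) p_s t_{s,0}; in particular this derivative is strictly negative if and only if the cascade condition π ∑_{s} s(s−1) p_s t_{s,0} > λ holds. -/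

import Mathlib

/-- Binomial probability `b_{s,r}(p) = (s choose r) p^r (1-p)^(s-r)`. -/
noncomputable def binomProb (s r : ℕ) (p : ℝ) : ℝ :=
  (s.choose r : ℝ) * p ^ r * (1 - p) ^ (s - r)

/-- `a(z) = ∑_s p_s ∑_{ℓ=0}^s t_{s,ℓ} ∑_{r=s-ℓ}^s r b_{s,r}(z)`. -/
noncomputable def aFun (p : ℕ → ℝ) (t : ℕ → ℕ → ℝ) (z : ℝ) : ℝ :=
  ∑' s : ℕ, p s * ∑ ℓ ∈ Finset.range (s + 1),
    t s ℓ * ∑ r ∈ Finset.Icc (s - ℓ) s, (r : ℝ) * binomProb s r z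

/-- `g(z) = λ z (1-π+πz) - a(1-π+πz)`. -/
noncomputable def gFun (p : ℕ → ℝ) (t : ℕ → ℕ → ℝ) (π z : ℝ) : ℝ :=
  (∑' s : ℕ, (s : ℝ) * p s) * z * (1 - π + π * z) - aFun p t (1 - π + π * z)

/-!
The summands of `a` are polynomials, and since `b_{s,r}' = s (b_{s-1,r-1} - b_{s-1,r})` their
derivatives are bounded on `[0,1]` by `(s³ + s²) p_s`, which is summable; so `a` may be
differentiated termwise at `1` within `[0,1]`. At `z = 1` only the terms `r = s` and `r = s - 1`
of `∑_{r ≥ s-ℓ} r b_{s,r}'` survive, giving `s²` for `ℓ = 0` and `s` otherwise, hence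
`a'(1) = λ + ∑ s(s-1) p_s t_{s,0}`. The chain rule through `z ↦ 1 - π + πz` gives
`g'(1) = λ(1 + π) - π a'(1)`.
-/

open Finset Filter Topology Polynomial

noncomputable section

theorem Convex.hasDerivWithinAt_tsum {ι F : Type*} [NormedAddCommGroup F] [NormedSpace ℝ F]
    [CompleteSpace F] {f f' : ι → ℝ → F} {u : ι → ℝ} {s : Set ℝ} {x₀ : ℝ}
    (hs : Convex ℝ s) (hu : Summable u)
    (hf : ∀ n, ∀ x ∈ s, HasDerivWithinAt (f n) (f' n x) s x)
    (hf' : ∀ n, ∀ x ∈ s, ‖f' n x‖ ≤ u n)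
    (hx₀ : x₀ ∈ s) (hf₀ : Summable fun n => f n x₀) :
    HasDerivWithinAt (fun x => ∑' n, f n x) (∑' n, f' n x₀) s x₀ := by
  have hlip : ∀ n, ∀ x ∈ s, ‖f n x - f n x₀‖ ≤ u n * ‖x - x₀‖ := fun n x hx =>
    hs.norm_image_sub_le_of_norm_hasDerivWithin_le (hf n) (hf' n) hx₀ hx
  have hsum : ∀ x ∈ s, Summable fun n => f n x := fun x hx => by
    simpa using (Summable.of_norm_bounded (hu.mul_right ‖x - x₀‖) (hlip · x hx)).add hf₀
  have hslope : ∀ x ∈ s, slope (fun y => ∑' n, f n y) x₀ x = ∑' n, slope (f n) x₀ x := by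
    intro x hx
    simp only [slope_def_module, tsum_const_smul'', (hsum x hx).tsum_sub hf₀]
  rw [hasDerivWithinAt_iff_tendsto_slope]
  refine .congr' (eventually_nhdsWithin_of_forall fun x hx => (hslope x hx.1).symm) <|
    tendsto_tsum_of_dominated_convergence hu
      (fun n => hasDerivWithinAt_iff_tendsto_slope.mp (hf n x₀ hx₀)) ?_
  filter_upwards [self_mem_nhdsWithin] with x ⟨hx, hne⟩ n
  rw [slope_def_module, norm_smul, norm_inv, inv_mul_le_iff₀ (norm_pos_iff.2 (sub_ne_zero.2 hne)),
    mul_comm]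
  exact hlip n x hx

lemma binomProb_eq_eval (s r : ℕ) (z : ℝ) :
    binomProb s r z = (bernsteinPolynomial ℝ s r).eval z := by
  simp [binomProb, bernsteinPolynomial]

lemma binomProb_nonneg {s r : ℕ} {z : ℝ} (hz : z ∈ Set.Icc (0 : ℝ) 1) : 0 ≤ binomProb s r z := by
  obtain ⟨hz0, hz1⟩ := hz
  have : 0 ≤ 1 - z := sub_nonneg.2 hz1
  unfold binomProb
  positivity

lemma sum_binomProb (s : ℕ) (z : ℝ) : ∑ r ∈ range (s + 1), binomProb s r z = 1 := by
  simpa [binomProb_eq_eval, eval_finsetSum] using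
    congrArg (eval z) (bernsteinPolynomial.sum ℝ s)

lemma binomProb_le_one {s r : ℕ} {z : ℝ} (hz : z ∈ Set.Icc (0 : ℝ) 1) : binomProb s r z ≤ 1 := by
  rcases le_or_gt r s with hr | hr
  · rw [← sum_binomProb s z]
    exact single_le_sum (f := (binomProb s · z)) (fun _ _ => binomProb_nonneg hz)
      (mem_range_succ_iff.2 hr)
  · simp [binomProb, Nat.choose_eq_zero_of_lt hr]

lemma binomProb_one (s r : ℕ) : binomProb s r 1 = if r = s then 1 else 0 := by
  rw [binomProb_eq_eval, bernsteinPolynomial.eval_at_1]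

lemma hasDerivAt_natCast_mul_binomProb (s r : ℕ) (z : ℝ) :
    HasDerivAt (fun y => r * binomProb s r y)
      (r * s * (binomProb (s - 1) (r - 1) z - binomProb (s - 1) r z)) z := by
  rcases r with _ | r
  · simpa using hasDerivAt_const z (0 : ℝ)
  · have := ((bernsteinPolynomial ℝ s (r + 1)).hasDerivAt z).const_mul ((r + 1 : ℕ) : ℝ)
    simpa [binomProb_eq_eval, bernsteinPolynomial.derivative_succ, mul_assoc] using this

def binomTailMean (s m : ℕ) (z : ℝ) : ℝ :=
  ∑ r ∈ Icc m s, (r : ℝ) * binomProb s r z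

/-- The `r = 0` summand is `0` whatever the truncated `r - 1` means. -/
def binomTailMeanDeriv (s m : ℕ) (z : ℝ) : ℝ :=
  ∑ r ∈ Icc m s, (r : ℝ) * s * (binomProb (s - 1) (r - 1) z - binomProb (s - 1) r z)

lemma hasDerivAt_binomTailMean (s m : ℕ) (z : ℝ) :
    HasDerivAt (binomTailMean s m) (binomTailMeanDeriv s m z) z :=
  HasDerivAt.fun_sum fun r _ => hasDerivAt_natCast_mul_binomProb s r z

lemma abs_binomTailMeanDeriv_le (s m : ℕ) {z : ℝ} (hz : z ∈ Set.Icc (0 : ℝ) 1) :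
    |binomTailMeanDeriv s m z| ≤ (s + 1) * s ^ 2 := by
  have hterm : ∀ r ∈ Icc m s,
      |(r : ℝ) * s * (binomProb (s - 1) (r - 1) z - binomProb (s - 1) r z)| ≤ s ^ 2 := by
    intro r hr
    have hrs : (r : ℝ) ≤ s := by exact_mod_cast (mem_Icc.1 hr).2
    have hdiff : |binomProb (s - 1) (r - 1) z - binomProb (s - 1) r z| ≤ 1 := by
      have h₁ := binomProb_nonneg (s := s - 1) (r := r - 1) hz
      have h₂ := binomProb_nonneg (s := s - 1) (r := r) hz
      have h₃ := binomProb_le_one (s := s - 1) (r := r - 1) hz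
      have h₄ := binomProb_le_one (s := s - 1) (r := r) hz
      exact abs_sub_le_iff.2 ⟨by linarith, by linarith⟩
    rw [abs_mul, abs_mul, Nat.abs_cast, Nat.abs_cast, sq]
    exact mul_le_of_le_one_right (by positivity) hdiff |>.trans (by gcongr)
  have hcard : ((Icc m s).card : ℝ) ≤ s + 1 := by
    exact_mod_cast (Nat.card_Icc m s).trans_le (by omega)
  calc |binomTailMeanDeriv s m z| ≤ ∑ r ∈ Icc m s, (s : ℝ) ^ 2 :=
        (abs_sum_le_sum_abs _ _).trans (sum_le_sum hterm)
    _ ≤ (s + 1) * s ^ 2 := by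
        rw [sum_const, nsmul_eq_mul]; gcongr

lemma binomTailMean_one {s m : ℕ} (hm : m ≤ s) : binomTailMean s m 1 = s := by
  simp [binomTailMean, binomProb_one, hm]

lemma binomTailMeanDeriv_one (s ℓ : ℕ) :
    binomTailMeanDeriv s (s - ℓ) 1 = s + if ℓ = 0 then (s : ℝ) * (s - 1) else 0 := by
  rcases Nat.eq_zero_or_pos ℓ with rfl | hℓ
  · rcases s with _ | n
    · simp [binomTailMeanDeriv]
    · simp [binomTailMeanDeriv, binomProb_one]; ring
  rcases s with _ | n
  · simp [binomTailMeanDeriv]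
  have htop : ({n, n + 1} : Finset ℕ) ⊆ Icc (n + 1 - ℓ) (n + 1) := by
    intro r hr; simp only [mem_insert, mem_singleton] at hr; simp only [mem_Icc]; omega
  rw [binomTailMeanDeriv, ← sum_subset htop fun r hr hr' => ?_, sum_pair (by omega)]
  · rcases Nat.eq_zero_or_pos n with rfl | hn
    · simp [binomProb_one]
    · simp [binomProb_one, if_neg (show n - 1 ≠ n by omega), if_neg hℓ.ne']; ring
  · simp only [mem_Icc] at hr; simp only [mem_insert, mem_singleton] at hr'
    rcases Nat.eq_zero_or_pos r with rfl | hr0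
    · simp
    · simp [binomProb_one, if_neg (show r - 1 ≠ n by omega), if_neg (show r ≠ n by omega)]

lemma Summable.natCast_pow_mul_of_le {p : ℕ → ℝ} {j k : ℕ} (hjk : j ≤ k)
    (h : Summable fun s : ℕ => (s : ℝ) ^ k * p s) :
    Summable fun s : ℕ => (s : ℝ) ^ j * p s := by
  refine h.abs.of_norm_bounded_eventually_nat ?_
  filter_upwards [eventually_ge_atTop 1] with s hs
  rw [Real.norm_eq_abs, abs_mul, abs_mul, abs_pow, abs_pow, Nat.abs_cast]
  gcongr
  exact Nat.one_le_cast.2 hs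

section Cascade

variable (p : ℕ → ℝ) (t : ℕ → ℕ → ℝ)

def aSummand (s : ℕ) (z : ℝ) : ℝ :=
  p s * ∑ ℓ ∈ range (s + 1), t s ℓ * binomTailMean s (s - ℓ) z

def aSummandDeriv (s : ℕ) (z : ℝ) : ℝ :=
  p s * ∑ ℓ ∈ range (s + 1), t s ℓ * binomTailMeanDeriv s (s - ℓ) z

lemma aFun_eq_tsum_aSummand : aFun p t = fun z => ∑' s, aSummand p t s z := rfl

lemma hasDerivAt_aSummand (s : ℕ) (z : ℝ) : HasDerivAt (aSummand p t s) (aSummandDeriv p t s z) z :=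
  (HasDerivAt.fun_sum fun ℓ _ => (hasDerivAt_binomTailMean s _ z).const_mul (t s ℓ)).const_mul (p s)

variable {p t}

lemma aSummand_one (ht1 : ∀ s, ∑ ℓ ∈ range (s + 1), t s ℓ = 1) (s : ℕ) :
    aSummand p t s 1 = s * p s := by
  simp [aSummand, binomTailMean_one, ← sum_mul, ht1, mul_comm]

lemma aSummandDeriv_one (ht1 : ∀ s, ∑ ℓ ∈ range (s + 1), t s ℓ = 1) (s : ℕ) :
    aSummandDeriv p t s 1 = s * p s + s * (s - 1) * p s * t s 0 := by
  simp [aSummandDeriv, binomTailMeanDeriv_one, mul_add, sum_add_distrib, ← sum_mul, ht1]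
  ring

lemma abs_aSummandDeriv_le (hp : ∀ s, 0 ≤ p s) (ht : ∀ s ℓ, 0 ≤ t s ℓ)
    (ht1 : ∀ s, ∑ ℓ ∈ range (s + 1), t s ℓ = 1) (s : ℕ) {z : ℝ} (hz : z ∈ Set.Icc (0 : ℝ) 1) :
    |aSummandDeriv p t s z| ≤ (s ^ 3 + s ^ 2) * p s := by
  calc |aSummandDeriv p t s z|
      ≤ p s * ∑ ℓ ∈ range (s + 1), t s ℓ * |binomTailMeanDeriv s (s - ℓ) z| := by
        rw [aSummandDeriv, abs_mul, abs_of_nonneg (hp s)]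
        refine mul_le_mul_of_nonneg_left ((abs_sum_le_sum_abs _ _).trans_eq
          (sum_congr rfl fun ℓ _ => ?_)) (hp s)
        rw [abs_mul, abs_of_nonneg (ht s ℓ)]
    _ ≤ p s * ∑ ℓ ∈ range (s + 1), t s ℓ * ((s + 1) * s ^ 2) := by
        gcongr with ℓ
        · exact hp s
        · exact ht s ℓ
        · exact abs_binomTailMeanDeriv_le s _ hz
    _ = (s ^ 3 + s ^ 2) * p s := by rw [← sum_mul, ht1]; ring

lemma hasDerivWithinAt_aFun_one (hp : ∀ s, 0 ≤ p s)
    (hp3 : Summable fun s : ℕ => (s : ℝ) ^ 3 * p s) (ht : ∀ s ℓ, 0 ≤ t s ℓ)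
    (ht1 : ∀ s, ∑ ℓ ∈ range (s + 1), t s ℓ = 1) :
    HasDerivWithinAt (aFun p t)
      ((∑' s : ℕ, (s : ℝ) * p s) + ∑' s : ℕ, (s : ℝ) * ((s : ℝ) - 1) * p s * t s 0)
      (Set.Icc 0 1) 1 := by
  have hbound : Summable fun s : ℕ => ((s : ℝ) ^ 3 + s ^ 2) * p s := by
    simpa [add_mul] using hp3.add (hp3.natCast_pow_mul_of_le (by norm_num : 2 ≤ 3))
  have hmean : Summable fun s : ℕ => (s : ℝ) * p s := by
    simpa using hp3.natCast_pow_mul_of_le (j := 1) (by norm_num)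
  have hderiv := (convex_Icc (0 : ℝ) 1).hasDerivWithinAt_tsum hbound
    (fun s z _ => (hasDerivAt_aSummand p t s z).hasDerivWithinAt)
    (fun s z hz => abs_aSummandDeriv_le hp ht ht1 s hz) ⟨zero_le_one, le_rfl⟩
    (by simpa [aSummand_one ht1] using hmean)
  have hcascade : Summable fun s : ℕ => (s : ℝ) * ((s : ℝ) - 1) * p s * t s 0 := by
    have hderiv_one : Summable fun s => aSummandDeriv p t s 1 :=
      hbound.of_norm_bounded fun s => abs_aSummandDeriv_le hp ht ht1 s ⟨zero_le_one, le_rfl⟩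
    simpa [aSummandDeriv_one ht1] using hderiv_one.sub hmean
  rw [aFun_eq_tsum_aSummand, ← hmean.tsum_add hcascade]
  simpa only [aSummandDeriv_one ht1] using hderiv

end Cascade

theorem stmt4 (p : ℕ → ℝ) (hp : ∀ s, 0 ≤ p s)
    (hp3 : Summable fun s : ℕ => (s : ℝ) ^ 3 * p s)
    (t : ℕ → ℕ → ℝ) (ht : ∀ s ℓ, 0 ≤ t s ℓ)
    (ht1 : ∀ s, ∑ ℓ ∈ Finset.range (s + 1), t s ℓ = 1)
    (π : ℝ) (hπ : π ∈ Set.Icc (0:ℝ) 1) :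
    HasDerivWithinAt (fun z => gFun p t π z)
      ((∑' s : ℕ, (s : ℝ) * p s) - π * ∑' s : ℕ, (s : ℝ) * ((s : ℝ) - 1) * p s * t s 0)
      (Set.Icc 0 1) 1 ∧
    ((∑' s : ℕ, (s : ℝ) * p s) - π * (∑' s : ℕ, (s : ℝ) * ((s : ℝ) - 1) * p s * t s 0) < 0 ↔
      (∑' s : ℕ, (s : ℝ) * p s) < π * ∑' s : ℕ, (s : ℝ) * ((s : ℝ) - 1) * p s * t s 0) := by
  refine ⟨?_, sub_neg⟩
  obtain ⟨hπ0, hπ1⟩ := hπ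
  have hw : HasDerivAt (fun z : ℝ => 1 - π + π * z) π 1 := by
    simpa using ((hasDerivAt_id (1 : ℝ)).const_mul π).const_add (1 - π)
  have hw_maps : Set.MapsTo (fun z : ℝ => 1 - π + π * z) (Set.Icc 0 1) (Set.Icc 0 1) :=
    fun z ⟨hz0, hz1⟩ => ⟨by nlinarith, by nlinarith⟩
  have ha := (hasDerivWithinAt_aFun_one hp hp3 ht ht1).comp_of_eq 1 hw.hasDerivWithinAt hw_maps
    (by ring)
  have hg := (((hasDerivAt_id (1 : ℝ)).const_mul (∑' s : ℕ, (s : ℝ) * p s)).mul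
    hw).hasDerivWithinAt.sub ha
  exact hg.congr_deriv (by simp only [id_eq]; ring)
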